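/- arXiv:1611.01615 — 2 statements merged into one kernel-verified Lean document; each statement's English description precedes it below -/
import Mathlib

section
/- Define Ψ: R^3 \ {0} → R^3 by Ψ(x) = (‖x‖_∞ / ‖x‖_2) · x. Then Ψ maps the cube [-a, a]^3 onto the closed Euclidean ball of radius a centered at 0, maps the boundary of the cube onto the sphere of radius a, and Ψ is bi-Lipschitz with constants (1/16, 16), i.e. (1/16)‖x−y‖_2 ≤ ‖Ψ(x)−Ψ(y)‖_2 ≤ 16‖x−y‖_2 for all x, y in any annular region [-a,a]^3 \ sQ. -/
open Metric

/-- The sup-norm of a point of Euclidean `ℝ³`. -/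
noncomputable def supNorm3 (x : EuclideanSpace ℝ (Fin 3)) : ℝ :=
  ‖(EuclideanSpace.equiv (Fin 3) ℝ) x‖

/-- The radial rescaling `Ψ(x) = (‖x‖_∞/‖x‖₂)·x`. -/
noncomputable def Psi (x : EuclideanSpace ℝ (Fin 3)) : EuclideanSpace ℝ (Fin 3) :=
  (supNorm3 x / ‖x‖) • x

/-- The closed cube `[-a,a]³`. -/
def cube3 (a : ℝ) : Set (EuclideanSpace ℝ (Fin 3)) := {x | ∀ i, |x i| ≤ a}

/-- The boundary of the cube `[-a,a]³`. -/
def cubeBdry3 (a : ℝ) : Set (EuclideanSpace ℝ (Fin 3)) :=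
  {x | (∀ i, |x i| ≤ a) ∧ ∃ i, |x i| = a}

/-- The open cube `(-b,b)³`. -/
def openCube3 (b : ℝ) : Set (EuclideanSpace ℝ (Fin 3)) := {x | ∀ i, |x i| < b}

abbrev E3 := EuclideanSpace ℝ (Fin 3)

lemma supNorm3_nonneg (x : E3) : 0 ≤ supNorm3 x := norm_nonneg _

lemma abs_le_supNorm3 (x : E3) (i : Fin 3) : |x i| ≤ supNorm3 x := by
  have := norm_le_pi_norm ((EuclideanSpace.equiv (Fin 3) ℝ) x) i
  simpa [supNorm3] using this

lemma supNorm3_le (x : E3) {c : ℝ} (hc : 0 ≤ c) (h : ∀ i, |x i| ≤ c) : supNorm3 x ≤ c := by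
  rw [supNorm3, pi_norm_le_iff_of_nonneg hc]
  simpa using h

lemma supNorm3_eq_zero {x : E3} : supNorm3 x = 0 ↔ x = 0 := by
  constructor
  · intro h
    ext i
    have h1 := abs_le_supNorm3 x i
    have h2 := abs_nonneg (x i)
    have : |x i| = 0 := le_antisymm (h ▸ h1) h2
    simpa using this
  · rintro rfl; simp [supNorm3]

lemma supNorm3_smul (c : ℝ) (x : E3) : supNorm3 (c • x) = |c| * supNorm3 x := by
  simp [supNorm3, norm_smul]

lemma exists_abs_eq_supNorm3 (x : E3) : ∃ i, |x i| = supNorm3 x := by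
  obtain ⟨i, -, hi⟩ := Finset.exists_mem_eq_sup Finset.univ Finset.univ_nonempty
    (fun i => ‖((EuclideanSpace.equiv (Fin 3) ℝ) x) i‖₊)
  exact ⟨i, by rw [supNorm3, Pi.norm_def, hi]; simp⟩

lemma coord_le_norm3 (x : E3) (i : Fin 3) : |x i| ≤ ‖x‖ := by
  rw [EuclideanSpace.norm_eq, show |x i| = Real.sqrt (|x i| ^ 2) from (Real.sqrt_sq (abs_nonneg _)).symm]
  apply Real.sqrt_le_sqrt
  have := Finset.single_le_sum (f := fun j => ‖x j‖ ^ 2) (fun j _ => by positivity)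
    (Finset.mem_univ i)
  simpa [Real.norm_eq_abs] using this

lemma supNorm3_le_norm (x : E3) : supNorm3 x ≤ ‖x‖ := by
  obtain ⟨i, hi⟩ := exists_abs_eq_supNorm3 x
  rw [← hi]; exact coord_le_norm3 x i

lemma norm_le_two_supNorm3 (x : E3) : ‖x‖ ≤ 2 * supNorm3 x := by
  rw [EuclideanSpace.norm_eq,
    show 2 * supNorm3 x = Real.sqrt ((2 * supNorm3 x) ^ 2) from
      (Real.sqrt_sq (by nlinarith [supNorm3_nonneg x])).symm]
  apply Real.sqrt_le_sqrt
  have : ∀ i : Fin 3, ‖x i‖ ^ 2 ≤ supNorm3 x ^ 2 := fun i => by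
    have h1 := abs_le_supNorm3 x i
    have h2 := abs_nonneg (x i)
    rw [Real.norm_eq_abs]; nlinarith
  calc ∑ i, ‖x i‖ ^ 2 ≤ ∑ _i : Fin 3, supNorm3 x ^ 2 :=
        Finset.sum_le_sum fun i _ => this i
    _ ≤ (2 * supNorm3 x) ^ 2 := by
        rw [Finset.sum_const]
        simp only [Finset.card_univ, Fintype.card_fin, nsmul_eq_mul]
        push_cast
        nlinarith [supNorm3_nonneg x]

noncomputable def Phi (x : EuclideanSpace ℝ (Fin 3)) : EuclideanSpace ℝ (Fin 3) :=
  (‖x‖ / supNorm3 x) • x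

lemma supNorm3_pos {x : E3} (hx : x ≠ 0) : 0 < supNorm3 x :=
  (supNorm3_nonneg x).lt_of_ne' (fun h => hx (supNorm3_eq_zero.mp h))

@[simp] lemma Psi_zero : Psi 0 = 0 := by simp [Psi]
@[simp] lemma Phi_zero : Phi 0 = 0 := by simp [Phi]

lemma norm_Psi {x : E3} (hx : x ≠ 0) : ‖Psi x‖ = supNorm3 x := by
  have hr : (0:ℝ) < ‖x‖ := norm_pos_iff.mpr hx
  rw [Psi, norm_smul, Real.norm_eq_abs, abs_div, abs_of_nonneg (supNorm3_nonneg x),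
    abs_of_pos hr, div_mul_cancel₀ _ hr.ne']

lemma supNorm3_Psi {x : E3} (hx : x ≠ 0) : supNorm3 (Psi x) = supNorm3 x ^ 2 / ‖x‖ := by
  have hr : (0:ℝ) < ‖x‖ := norm_pos_iff.mpr hx
  rw [Psi, supNorm3_smul, abs_div, abs_of_nonneg (supNorm3_nonneg x), abs_of_pos hr]
  ring

lemma norm_Phi {x : E3} (hx : x ≠ 0) : ‖Phi x‖ = ‖x‖ ^ 2 / supNorm3 x := by
  have hm := supNorm3_pos hx
  rw [Phi, norm_smul, Real.norm_eq_abs, abs_div, abs_of_nonneg (norm_nonneg x),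
    abs_of_pos hm]
  ring

lemma supNorm3_Phi {x : E3} (hx : x ≠ 0) : supNorm3 (Phi x) = ‖x‖ := by
  have hm := supNorm3_pos hx
  rw [Phi, supNorm3_smul, abs_div, abs_of_nonneg (norm_nonneg x), abs_of_pos hm,
    div_mul_cancel₀ _ hm.ne']

lemma Psi_ne_zero {x : E3} (hx : x ≠ 0) : Psi x ≠ 0 := by
  intro h
  have := norm_Psi hx
  rw [h, norm_zero] at this
  exact (supNorm3_pos hx).ne' this.symm

lemma Phi_ne_zero {x : E3} (hx : x ≠ 0) : Phi x ≠ 0 := by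
  intro h
  have := supNorm3_Phi hx
  rw [h, supNorm3_eq_zero.mpr rfl] at this
  exact hx (norm_eq_zero.mp this.symm)

lemma Phi_Psi {x : E3} (hx : x ≠ 0) : Phi (Psi x) = x := by
  have hr : (0:ℝ) < ‖x‖ := norm_pos_iff.mpr hx
  have hm := supNorm3_pos hx
  rw [Phi, norm_Psi hx, supNorm3_Psi hx, Psi, smul_smul]
  rw [show supNorm3 x / (supNorm3 x ^ 2 / ‖x‖) * (supNorm3 x / ‖x‖) = 1 by
    field_simp]
  simp

lemma Psi_Phi {x : E3} (hx : x ≠ 0) : Psi (Phi x) = x := by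
  have hr : (0:ℝ) < ‖x‖ := norm_pos_iff.mpr hx
  have hm := supNorm3_pos hx
  rw [Psi, norm_Phi hx, supNorm3_Phi hx, Phi, smul_smul]
  rw [show ‖x‖ / (‖x‖ ^ 2 / supNorm3 x) * (‖x‖ / supNorm3 x) = 1 by
    field_simp]
  simp

lemma abs_supNorm3_sub (x y : E3) : |supNorm3 x - supNorm3 y| ≤ ‖x - y‖ := by
  have h := abs_norm_sub_norm_le ((EuclideanSpace.equiv (Fin 3) ℝ) x)
    ((EuclideanSpace.equiv (Fin 3) ℝ) y)
  rw [← map_sub] at h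
  exact h.trans (supNorm3_le_norm _)

lemma smul_sub_smul_norm (p q : ℝ) (x y : E3) :
    ‖p • x - q • y‖ ≤ |p| * ‖x - y‖ + |p - q| * ‖y‖ := by
  have h : p • x - q • y = p • (x - y) + (p - q) • y := by
    rw [smul_sub, sub_smul]; abel
  rw [h]
  calc ‖p • (x - y) + (p - q) • y‖ ≤ ‖p • (x - y)‖ + ‖(p - q) • y‖ := norm_add_le _ _
    _ = |p| * ‖x - y‖ + |p - q| * ‖y‖ := by
        rw [norm_smul, norm_smul, Real.norm_eq_abs, Real.norm_eq_abs]

lemma psi_lip {x y : E3} (hx : x ≠ 0) (hy : y ≠ 0) (h : ‖y‖ ≤ ‖x‖) :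
    ‖Psi x - Psi y‖ ≤ 16 * ‖x - y‖ := by
  have hrx : (0:ℝ) < ‖x‖ := norm_pos_iff.mpr hx
  have hry : (0:ℝ) < ‖y‖ := norm_pos_iff.mpr hy
  have hmx := supNorm3_pos hx
  have hmy := supNorm3_pos hy
  have hmlx := supNorm3_le_norm x
  have hmly := supNorm3_le_norm y
  have hmd := abs_supNorm3_sub x y
  have hrd := abs_norm_sub_norm_le x y
  have hd : (0:ℝ) ≤ ‖x - y‖ := norm_nonneg _
  have hnum : |supNorm3 x * ‖y‖ - supNorm3 y * ‖x‖| ≤ 2 * ‖x - y‖ * ‖x‖ := by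
    have he : supNorm3 x * ‖y‖ - supNorm3 y * ‖x‖
        = (supNorm3 x - supNorm3 y) * ‖y‖ + supNorm3 y * (‖y‖ - ‖x‖) := by ring
    rw [he]
    calc |(supNorm3 x - supNorm3 y) * ‖y‖ + supNorm3 y * (‖y‖ - ‖x‖)|
        ≤ |(supNorm3 x - supNorm3 y) * ‖y‖| + |supNorm3 y * (‖y‖ - ‖x‖)| := abs_add_le _ _
      _ = |supNorm3 x - supNorm3 y| * ‖y‖ + supNorm3 y * |‖y‖ - ‖x‖| := by
          rw [abs_mul, abs_mul, abs_of_pos hry, abs_of_pos hmy]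
      _ ≤ 2 * ‖x - y‖ * ‖x‖ := by
          rw [abs_sub_comm (‖y‖) (‖x‖)] at *
          nlinarith [abs_nonneg (supNorm3 x - supNorm3 y), abs_nonneg (‖x‖ - ‖y‖)]
  have hA : |supNorm3 x / ‖x‖ - supNorm3 y / ‖y‖| * ‖y‖ ≤ 2 * ‖x - y‖ := by
    have heq : supNorm3 x / ‖x‖ - supNorm3 y / ‖y‖
        = (supNorm3 x * ‖y‖ - supNorm3 y * ‖x‖) / (‖x‖ * ‖y‖) := by
      field_simp
    rw [heq, abs_div, abs_of_pos (mul_pos hrx hry), div_mul_eq_mul_div,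
      div_le_iff₀ (mul_pos hrx hry)]
    nlinarith
  have hB : |supNorm3 x / ‖x‖| ≤ 1 := by
    rw [abs_of_nonneg (by positivity)]
    exact div_le_one_of_le₀ hmlx hrx.le
  calc ‖Psi x - Psi y‖ ≤ |supNorm3 x / ‖x‖| * ‖x - y‖
        + |supNorm3 x / ‖x‖ - supNorm3 y / ‖y‖| * ‖y‖ := by
        rw [Psi, Psi]; exact smul_sub_smul_norm _ _ _ _
    _ ≤ 1 * ‖x - y‖ + 2 * ‖x - y‖ :=
        add_le_add (mul_le_mul_of_nonneg_right hB hd) hA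
    _ ≤ 16 * ‖x - y‖ := by linarith

lemma phi_lip {x y : E3} (hx : x ≠ 0) (hy : y ≠ 0) (h : ‖y‖ ≤ ‖x‖) :
    ‖Phi x - Phi y‖ ≤ 16 * ‖x - y‖ := by
  have hrx : (0:ℝ) < ‖x‖ := norm_pos_iff.mpr hx
  have hry : (0:ℝ) < ‖y‖ := norm_pos_iff.mpr hy
  have hmx := supNorm3_pos hx
  have hmy := supNorm3_pos hy
  have hmlx := supNorm3_le_norm x
  have hmly := supNorm3_le_norm y
  have h2x := norm_le_two_supNorm3 x
  have h2y := norm_le_two_supNorm3 y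
  have hmd := abs_supNorm3_sub x y
  have hrd := abs_norm_sub_norm_le x y
  have hd : (0:ℝ) ≤ ‖x - y‖ := norm_nonneg _
  have hnum : |‖x‖ * supNorm3 y - ‖y‖ * supNorm3 x| ≤ ‖x - y‖ * supNorm3 y + ‖y‖ * ‖x - y‖ := by
    have he : ‖x‖ * supNorm3 y - ‖y‖ * supNorm3 x
        = (‖x‖ - ‖y‖) * supNorm3 y + ‖y‖ * (supNorm3 y - supNorm3 x) := by ring
    rw [he]
    calc |(‖x‖ - ‖y‖) * supNorm3 y + ‖y‖ * (supNorm3 y - supNorm3 x)|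
        ≤ |(‖x‖ - ‖y‖) * supNorm3 y| + |‖y‖ * (supNorm3 y - supNorm3 x)| := abs_add_le _ _
      _ = |‖x‖ - ‖y‖| * supNorm3 y + ‖y‖ * |supNorm3 y - supNorm3 x| := by
          rw [abs_mul, abs_mul, abs_of_pos hry, abs_of_pos hmy]
      _ ≤ ‖x - y‖ * supNorm3 y + ‖y‖ * ‖x - y‖ := by
          rw [abs_sub_comm (supNorm3 y) (supNorm3 x)] at *
          nlinarith
  have hA : |‖x‖ / supNorm3 x - ‖y‖ / supNorm3 y| * ‖y‖ ≤ 6 * ‖x - y‖ := by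
    have heq : ‖x‖ / supNorm3 x - ‖y‖ / supNorm3 y
        = (‖x‖ * supNorm3 y - ‖y‖ * supNorm3 x) / (supNorm3 x * supNorm3 y) := by
      field_simp
    rw [heq, abs_div, abs_of_pos (mul_pos hmx hmy), div_mul_eq_mul_div,
      div_le_iff₀ (mul_pos hmx hmy)]
    have step1 : |‖x‖ * supNorm3 y - ‖y‖ * supNorm3 x| * ‖y‖
        ≤ (‖x - y‖ * supNorm3 y + ‖y‖ * ‖x - y‖) * ‖y‖ :=
      mul_le_mul_of_nonneg_right hnum hry.le
    have step2 : (‖x - y‖ * supNorm3 y + ‖y‖ * ‖x - y‖) * ‖y‖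
        ≤ (3 * (‖x - y‖ * supNorm3 y)) * ‖y‖ := by
      nlinarith [mul_le_mul_of_nonneg_right h2y (mul_nonneg hd hry.le)]
    have step3 : (3 * (‖x - y‖ * supNorm3 y)) * ‖y‖
        ≤ (3 * (‖x - y‖ * supNorm3 y)) * (2 * supNorm3 x) := by
      have hy2 : ‖y‖ ≤ 2 * supNorm3 x := h.trans h2x
      exact mul_le_mul_of_nonneg_left hy2 (by positivity)
    nlinarith
  have hB : |‖x‖ / supNorm3 x| ≤ 2 := by
    rw [abs_of_nonneg (by positivity), div_le_iff₀ hmx]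
    linarith
  calc ‖Phi x - Phi y‖ ≤ |‖x‖ / supNorm3 x| * ‖x - y‖
        + |‖x‖ / supNorm3 x - ‖y‖ / supNorm3 y| * ‖y‖ := by
        rw [Phi, Phi]; exact smul_sub_smul_norm _ _ _ _
    _ ≤ 2 * ‖x - y‖ + 6 * ‖x - y‖ := by gcongr
    _ ≤ 16 * ‖x - y‖ := by linarith


lemma Phi_apply_abs {y : E3} (i : Fin 3) :
    |Phi y i| = (‖y‖ / supNorm3 y) * |y i| := by
  have : Phi y i = (‖y‖ / supNorm3 y) * y i := rfl
  rw [this, abs_mul, abs_of_nonneg (div_nonneg (norm_nonneg _) (supNorm3_nonneg _))]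

/-- `Ψ` maps the cube `[-a,a]³` onto the closed Euclidean ball of radius `a`, its boundary onto
the sphere of radius `a`, and is `(1/16, 16)`-bi-Lipschitz on any annular region
`[-a,a]³ \ (-b,b)³`. -/
theorem Psi_cube_to_ball (a : ℝ) (ha : 0 < a) :
    Psi '' cube3 a = closedBall (0 : EuclideanSpace ℝ (Fin 3)) a ∧
    Psi '' cubeBdry3 a = sphere (0 : EuclideanSpace ℝ (Fin 3)) a ∧
    ∀ b : ℝ, 0 < b →
      ∀ x ∈ cube3 a \ openCube3 b, ∀ y ∈ cube3 a \ openCube3 b,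
        (1 / 16) * ‖x - y‖ ≤ ‖Psi x - Psi y‖ ∧ ‖Psi x - Psi y‖ ≤ 16 * ‖x - y‖ := by
  refine ⟨?_, ?_, ?_⟩
  · apply Set.Subset.antisymm
    · rintro _ ⟨x, hx, rfl⟩
      rw [mem_closedBall_zero_iff]
      by_cases hx0 : x = 0
      · subst hx0; simp [ha.le]
      · rw [norm_Psi hx0]
        exact supNorm3_le x ha.le hx
    · intro y hy
      rw [mem_closedBall_zero_iff] at hy
      by_cases hy0 : y = 0
      · exact ⟨0, fun i => by simp [ha.le], by simp [hy0]⟩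
      · have hry : (0:ℝ) < ‖y‖ := norm_pos_iff.mpr hy0
        have hmy := supNorm3_pos hy0
        refine ⟨Phi y, fun i => ?_, Psi_Phi hy0⟩
        rw [Phi_apply_abs]
        calc (‖y‖ / supNorm3 y) * |y i| ≤ (‖y‖ / supNorm3 y) * supNorm3 y :=
              mul_le_mul_of_nonneg_left (abs_le_supNorm3 y i) (by positivity)
          _ = ‖y‖ := div_mul_cancel₀ _ hmy.ne'
          _ ≤ a := hy
  · apply Set.Subset.antisymm
    · rintro _ ⟨x, ⟨hx1, i, hi⟩, rfl⟩
      have hsup : supNorm3 x = a :=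
        le_antisymm (supNorm3_le x ha.le hx1) (hi ▸ abs_le_supNorm3 x i)
      have hx0 : x ≠ 0 := fun h => by
        rw [h, supNorm3_eq_zero.mpr rfl] at hsup; exact ha.ne hsup
      rw [mem_sphere_zero_iff_norm, norm_Psi hx0, hsup]
    · intro y hy
      rw [mem_sphere_zero_iff_norm] at hy
      have hy0 : y ≠ 0 := fun h => by rw [h, norm_zero] at hy; exact ha.ne' hy.symm
      have hry : (0:ℝ) < ‖y‖ := norm_pos_iff.mpr hy0
      have hmy := supNorm3_pos hy0
      obtain ⟨j, hj⟩ := exists_abs_eq_supNorm3 y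
      refine ⟨Phi y, ⟨fun i => ?_, j, ?_⟩, Psi_Phi hy0⟩
      · rw [Phi_apply_abs]
        calc (‖y‖ / supNorm3 y) * |y i| ≤ (‖y‖ / supNorm3 y) * supNorm3 y :=
              mul_le_mul_of_nonneg_left (abs_le_supNorm3 y i) (by positivity)
          _ = ‖y‖ := div_mul_cancel₀ _ hmy.ne'
          _ ≤ a := hy.le
      · rw [Phi_apply_abs, hj, div_mul_cancel₀ _ hmy.ne', hy]
  · intro b hb x hx y hy
    have hne : ∀ z : E3, z ∈ cube3 a \ openCube3 b → z ≠ 0 := by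
      rintro z ⟨-, hz⟩ rfl
      exact hz fun i => by simpa using hb
    have hx0 := hne x hx
    have hy0 := hne y hy
    constructor
    · have hPx := Psi_ne_zero hx0
      have hPy := Psi_ne_zero hy0
      rcases le_total ‖Psi y‖ ‖Psi x‖ with h | h
      · have := phi_lip hPx hPy h
        rw [Phi_Psi hx0, Phi_Psi hy0] at this
        linarith
      · have := phi_lip hPy hPx h
        rw [Phi_Psi hx0, Phi_Psi hy0, norm_sub_rev, norm_sub_rev (Psi y)] at this
        linarith
    · rcases le_total ‖y‖ ‖x‖ with h | h
      · exact psi_lip hx0 hy0 h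
      · rw [norm_sub_rev, norm_sub_rev x]
        exact psi_lip hy0 hx0 h
end

section
/- Let (X_n, μ_n) be compact metric measure spaces forming an inverse system with 1-Lipschitz surjective bonding maps π_{n+1,n} such that (π_{n+1,n})_* μ_{n+1} = μ_n and sup_{x∈X_n} diam(π_{∞,n}^{-1}(x)) → 0. Then there exists a unique Radon measure μ_∞ on the inverse limit X_∞ with (π_{∞,n})_* μ_∞ = μ_n for every n. -/
open Filter MeasureTheory

/-- The inverse limit of a tower of spaces `X n` with bonding maps `π n : X (n+1) → X n`. -/
def InvLim (X : ℕ → Type*) (π : ∀ n, X (n + 1) → X n) : Type _ :=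
  {x : ∀ n, X n // ∀ n, π n (x (n + 1)) = x n}

instance (X : ℕ → Type*) [∀ n, TopologicalSpace (X n)] (π : ∀ n, X (n + 1) → X n) :
    TopologicalSpace (InvLim X π) :=
  instTopologicalSpaceSubtype

instance (X : ℕ → Type*) [∀ n, MeasurableSpace (X n)] (π : ∀ n, X (n + 1) → X n) :
    MeasurableSpace (InvLim X π) :=
  Subtype.instMeasurableSpace

/-- The limsup distance on the inverse limit. -/
noncomputable def invLimDist {X : ℕ → Type*} [∀ n, MetricSpace (X n)]
    (π : ∀ n, X (n + 1) → X n) (x y : InvLim X π) : ℝ :=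
  Filter.limsup (fun n => dist (x.1 n) (y.1 n)) Filter.atTop

/-!
For compact `K` in the inverse limit the masses `μ_n(π_n K)` decrease in `n`, because `π_n K` is
the image of `π_{n+1} K` under a measure-preserving bonding map; let `λ(K)` be their limit.
Disjoint compact sets already have disjoint projections at some finite level (compactness of
their product against the decreasing closed sets `{x_n = y_n}`), so `λ` is additive: a content.
Surjectivity of the projections gives `λ(π_n⁻¹ B) = μ_n(B)`, and together with outer regularity
of `μ_n` this makes the content regular, so the measure it induces is Radon with marginals `μ_n`.
For uniqueness, the σ-algebras `π_n⁻¹(Borel)` increase and generate, so their union is a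
generating π-system on which any two solutions agree.
-/

open scoped ENNReal Topology

namespace InvLim

variable {X : ℕ → Type*} {π : ∀ n, X (n + 1) → X n}

variable (π) in
/-- `bond π h = π m ∘ π (m + 1) ∘ ⋯ ∘ π (n - 1)`. -/
def bond {m n : ℕ} (h : m ≤ n) : X n → X m :=
  Nat.leRec (motive := fun n _ => X n → X m) id (fun k _ g => g ∘ π k) h

@[simp] theorem bond_refl (m : ℕ) : bond π (le_refl m) = id :=
  Nat.leRec_self _ _

theorem bond_succ {m n : ℕ} (h : m ≤ n) :
    bond π (h.trans n.le_succ) = bond π h ∘ π n :=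
  Nat.leRec_succ _ _ h

theorem bond_bond {l m n : ℕ} (hlm : l ≤ m) (hmn : m ≤ n) (x : X n) :
    bond π hlm (bond π hmn x) = bond π (hlm.trans hmn) x := by
  induction n, hmn using Nat.le_induction with
  | base => rw [bond_refl]; rfl
  | succ n hmn ih =>
    rw [bond_succ hmn, bond_succ (hlm.trans hmn), Function.comp_apply, Function.comp_apply,
      ih]

theorem bond_succ_self (m : ℕ) : bond π m.le_succ = π m := by
  rw [bond_succ le_rfl (m := m), bond_refl]
  rfl

theorem measurable_bond [∀ n, MeasurableSpace (X n)] (hπ : ∀ n, Measurable (π n))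
    {m n : ℕ} (h : m ≤ n) : Measurable (bond π h) := by
  induction n, h using Nat.le_induction with
  | base => rw [bond_refl]; exact measurable_id
  | succ n h ih => rw [bond_succ]; exact ih.comp (hπ n)

def proj (n : ℕ) (x : InvLim X π) : X n := x.1 n

theorem bond_proj (x : InvLim X π) {m n : ℕ} (h : m ≤ n) :
    bond π h (x.proj n) = x.proj m := by
  induction n, h using Nat.le_induction with
  | base => rw [bond_refl]; rfl
  | succ n h ih => rw [bond_succ, Function.comp_apply, proj, x.2 n]; exact ih

theorem proj_eq_proj_of_le {x y : InvLim X π} {m n : ℕ} (h : m ≤ n)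
    (hxy : x.proj n = y.proj n) : x.proj m = y.proj m := by
  rw [← bond_proj x h, ← bond_proj y h, hxy]

theorem proj_surjective (hsurj : ∀ n, Function.Surjective (π n)) (n : ℕ) :
    Function.Surjective (proj n : InvLim X π → X n) := by
  intro t
  -- lift `t` to every level `k ≥ n` along sections of the bonding maps, and read coordinate `m`
  -- off level `m + n`
  let lift : ∀ {k}, n ≤ k → X k := fun h =>
    Nat.leRecOn h (fun {k} => Function.surjInv (hsurj k)) t
  have bond_lift {j k} (hj : n ≤ j) (hjk : j ≤ k) :
      bond π hjk (lift (hj.trans hjk)) = lift hj := by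
    induction k, hjk using Nat.le_induction with
    | base => rw [bond_refl]; rfl
    | succ k hjk ih =>
      rw [bond_succ hjk, Function.comp_apply, ← ih]
      simp only [lift]
      rw [Nat.leRecOn_succ (hj.trans hjk)]
      exact congrArg _ (Function.surjInv_eq (hsurj k) _)
  refine ⟨⟨fun m => bond π (m.le_add_right n) (lift (n.le_add_left m)), fun m => ?_⟩, ?_⟩
  · have hle : m + n ≤ m + 1 + n := by omega
    show π m (bond π _ (lift _)) = bond π _ (lift _)
    rw [← bond_succ_self (π := π) m, bond_bond, ← bond_lift (n.le_add_left m) hle, bond_bond]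
  · show bond π _ (lift _) = t
    rw [bond_lift le_rfl]
    exact Nat.leRecOn_self _

theorem image_proj_preimage_proj (hsurj : ∀ n, Function.Surjective (π n)) {m n : ℕ}
    (h : m ≤ n) (B : Set (X m)) : proj n '' (proj m ⁻¹' B : Set (InvLim X π)) = bond π h ⁻¹' B := by
  ext y
  obtain ⟨x, rfl⟩ := proj_surjective hsurj n y
  refine ⟨?_, fun hx => ⟨x, by rwa [Set.mem_preimage, ← bond_proj x h], rfl⟩⟩
  rintro ⟨x', hx', hx'x⟩
  rwa [Set.mem_preimage, ← hx'x, bond_proj]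

section Topology

variable [∀ n, TopologicalSpace (X n)]

theorem continuous_proj (n : ℕ) : Continuous (proj n : InvLim X π → X n) :=
  (continuous_apply n).comp continuous_subtype_val

theorem compactSpace [∀ n, CompactSpace (X n)] [∀ n, T2Space (X n)]
    (hπ : ∀ n, Continuous (π n)) : CompactSpace (InvLim X π) := by
  refine isCompact_iff_compactSpace.mp
    (IsClosed.isCompact (s := {x : ∀ n, X n | ∀ n, π n (x (n + 1)) = x n}) ?_)
  rw [Set.ofPred_forall]
  exact isClosed_iInter fun n =>
    isClosed_eq ((hπ n).comp (continuous_apply _)) (continuous_apply n)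

instance [∀ n, T2Space (X n)] : T2Space (InvLim X π) :=
  inferInstanceAs (T2Space (Subtype _))

instance [∀ n, SecondCountableTopology (X n)] : SecondCountableTopology (InvLim X π) :=
  inferInstanceAs (SecondCountableTopology {x : ∀ n, X n | ∀ n, π n (x (n + 1)) = x n})

instance [∀ n, MeasurableSpace (X n)] [∀ n, BorelSpace (X n)]
    [∀ n, SecondCountableTopology (X n)] : BorelSpace (InvLim X π) :=
  Subtype.borelSpace _

theorem exists_disjoint_image_proj [∀ n, T2Space (X n)] {K L : Set (InvLim X π)}
    (hK : IsCompact K) (hL : IsCompact L) (hKL : Disjoint K L) :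
    ∃ N, ∀ n ≥ N, Disjoint (proj n '' K) (proj n '' L) := by
  let agree (n : ℕ) : Set (InvLim X π × InvLim X π) := {q | q.1.proj n = q.2.proj n}
  have agree_antitone : Antitone agree := fun m n h q hq => proj_eq_proj_of_le h hq
  have agree_empty : K ×ˢ L ∩ ⋂ n, agree n = ∅ := by
    refine Set.eq_empty_of_forall_notMem fun ⟨x, y⟩ ⟨⟨hx, hy⟩, hxy⟩ => ?_
    have : x = y := Subtype.ext <| funext <| Set.mem_iInter.mp hxy
    exact Set.disjoint_left.mp hKL hx (this ▸ hy)
  obtain ⟨N, hN⟩ := (hK.prod hL).elim_directed_family_closed agree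
    (fun n => isClosed_eq ((continuous_proj n).comp continuous_fst)
      ((continuous_proj n).comp continuous_snd)) agree_empty agree_antitone.directed_ge
  refine ⟨N, fun n hn => Set.disjoint_left.mpr ?_⟩
  rintro _ ⟨x, hx, rfl⟩ ⟨y, hy, hxy⟩
  exact Set.eq_empty_iff_forall_notMem.mp hN (x, y)
    ⟨⟨hx, hy⟩, proj_eq_proj_of_le hn hxy.symm⟩

end Topology

section Measure

variable [∀ n, MeasurableSpace (X n)] {μs : ∀ n, Measure (X n)}

theorem measurable_proj (n : ℕ) : Measurable (proj n : InvLim X π → X n) :=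
  (measurable_pi_apply n).comp measurable_subtype_coe

theorem map_bond (hπ : ∀ n, Measurable (π n)) (hμ : ∀ n, (μs (n + 1)).map (π n) = μs n)
    {m n : ℕ} (h : m ≤ n) : (μs n).map (bond π h) = μs m := by
  induction n, h using Nat.le_induction with
  | base => rw [bond_refl, Measure.map_id]
  | succ n h ih => rw [bond_succ h, ← Measure.map_map (measurable_bond hπ h) (hπ n), hμ, ih]

theorem antitone_measure_image_proj (hπ : ∀ n, Measurable (π n))
    (hμ : ∀ n, (μs (n + 1)).map (π n) = μs n) (K : Set (InvLim X π)) :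
    Antitone fun n => μs n (proj n '' K) := by
  refine antitone_nat_of_succ_le fun n => ?_
  have : π n '' (proj (n + 1) '' K) = proj n '' K := by
    rw [Set.image_image]
    exact Set.image_congr fun x _ => x.2 n
  calc μs (n + 1) (proj (n + 1) '' K)
      ≤ (μs (n + 1)).map (π n) (π n '' (proj (n + 1) '' K)) :=
        Measure.le_map_apply_image (hπ n).aemeasurable _
    _ = μs n (proj n '' K) := by rw [hμ, this]

variable (μs) in
noncomputable def limContent (K : Set (InvLim X π)) : ℝ≥0∞ :=
  ⨅ n, μs n (proj n '' K)

theorem tendsto_limContent (hπ : ∀ n, Measurable (π n))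
    (hμ : ∀ n, (μs (n + 1)).map (π n) = μs n) (K : Set (InvLim X π)) :
    Tendsto (fun n => μs n (proj n '' K)) atTop (𝓝 (limContent μs K)) :=
  tendsto_atTop_iInf (antitone_measure_image_proj hπ hμ K)

theorem limContent_mono {K L : Set (InvLim X π)} (h : K ⊆ L) :
    limContent μs K ≤ limContent μs L :=
  iInf_mono fun _ => measure_mono (Set.image_mono h)

theorem limContent_lt_top [IsFiniteMeasure (μs 0)] (K : Set (InvLim X π)) :
    limContent μs K < ∞ :=
  (iInf_le _ 0).trans_lt (measure_lt_top _ _)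

theorem limContent_union_le (hπ : ∀ n, Measurable (π n))
    (hμ : ∀ n, (μs (n + 1)).map (π n) = μs n) (K L : Set (InvLim X π)) :
    limContent μs (K ∪ L) ≤ limContent μs K + limContent μs L :=
  le_of_tendsto_of_tendsto' (tendsto_limContent hπ hμ _)
    ((tendsto_limContent hπ hμ K).add (tendsto_limContent hπ hμ L))
    fun n => by rw [Set.image_union]; exact measure_union_le _ _

theorem limContent_union [∀ n, TopologicalSpace (X n)] [∀ n, T2Space (X n)]
    [∀ n, OpensMeasurableSpace (X n)] (hπ : ∀ n, Measurable (π n))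
    (hμ : ∀ n, (μs (n + 1)).map (π n) = μs n) {K L : Set (InvLim X π)}
    (hK : IsCompact K) (hL : IsCompact L) (hKL : Disjoint K L) :
    limContent μs (K ∪ L) = limContent μs K + limContent μs L := by
  obtain ⟨N, hN⟩ := exists_disjoint_image_proj hK hL hKL
  refine tendsto_nhds_unique (tendsto_limContent hπ hμ _)
    (((tendsto_limContent hπ hμ K).add (tendsto_limContent hπ hμ L)).congr' ?_)
  filter_upwards [eventually_ge_atTop N] with n hn
  rw [Set.image_union, measure_union (hN n hn)
    (hL.image (continuous_proj n)).isClosed.measurableSet]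

theorem limContent_preimage_proj (hsurj : ∀ n, Function.Surjective (π n))
    (hπ : ∀ n, Measurable (π n)) (hμ : ∀ n, (μs (n + 1)).map (π n) = μs n)
    {n : ℕ} {B : Set (X n)} (hB : MeasurableSet B) :
    limContent μs (proj n ⁻¹' B : Set (InvLim X π)) = μs n B := by
  have level (m : ℕ) (h : n ≤ m) :
      μs m (proj m '' (proj n ⁻¹' B : Set (InvLim X π))) = μs n B := by
    rw [image_proj_preimage_proj hsurj h, ← Measure.map_apply (measurable_bond hπ h) hB,
      map_bond hπ hμ]
  refine le_antisymm ((iInf_le _ n).trans_eq (level n le_rfl)) (le_iInf fun m => ?_)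
  calc μs n B = μs (max m n) (proj (max m n) '' (proj n ⁻¹' B)) :=
        (level _ (le_max_right m n)).symm
    _ ≤ μs m (proj m '' (proj n ⁻¹' B)) :=
        antitone_measure_image_proj hπ hμ _ (le_max_left m n)

end Measure

section Uniqueness

variable [∀ n, MeasurableSpace (X n)]

theorem measurableSpace_eq_iSup_comap_proj :
    (inferInstance : MeasurableSpace (InvLim X π)) =
      ⨆ n, MeasurableSpace.comap (proj n) inferInstance := by
  change MeasurableSpace.comap Subtype.val MeasurableSpace.pi = _
  simp only [MeasurableSpace.pi, MeasurableSpace.comap_iSup, MeasurableSpace.comap_comp]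
  rfl

theorem monotone_comap_proj (hπ : ∀ n, Measurable (π n)) :
    Monotone fun n => MeasurableSpace.comap (proj n : InvLim X π → X n) inferInstance := by
  intro m n h
  have : (proj m : InvLim X π → X m) = bond π h ∘ proj n :=
    funext fun x => (bond_proj x h).symm
  simp only [this, ← MeasurableSpace.comap_comp]
  exact MeasurableSpace.comap_mono (measurable_bond hπ h).comap_le

theorem measure_eq_of_map_proj_eq (hπ : ∀ n, Measurable (π n)) {μs : ∀ n, Measure (X n)}
    [IsFiniteMeasure (μs 0)] {ν ν' : Measure (InvLim X π)}
    (hν : ∀ n, ν.map (proj n) = μs n) (hν' : ∀ n, ν'.map (proj n) = μs n) : ν = ν' := by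
  have : IsFiniteMeasure (ν.map (proj 0)) := hν 0 ▸ inferInstance
  have : IsFiniteMeasure ν := Measure.isFiniteMeasure_of_map (measurable_proj 0).aemeasurable
  have map_eq (n : ℕ) {B : Set (X n)} (hB : MeasurableSet B) :
      ν (proj n ⁻¹' B) = ν' (proj n ⁻¹' B) := by
    rw [← Measure.map_apply (measurable_proj n) hB, ← Measure.map_apply (measurable_proj n) hB,
      hν, hν']
  refine ext_of_generate_finite _ (measurableSpace_eq_iSup_comap_proj.trans
    (MeasurableSpace.generateFrom_iUnion_measurableSet _).symm)
    (isPiSystem_iUnion_of_directed_le _ (fun _ => @MeasurableSpace.isPiSystem_measurableSet _ (_))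
      (monotone_comap_proj hπ).directed_le) ?_ (map_eq 0 MeasurableSet.univ)
  rintro _ ⟨_, ⟨n, rfl⟩, B, hB, rfl⟩
  exact map_eq n hB

end Uniqueness

section Construction

open TopologicalSpace

variable [∀ n, TopologicalSpace (X n)] [∀ n, T2Space (X n)] [∀ n, MeasurableSpace (X n)]
  [∀ n, OpensMeasurableSpace (X n)]

variable (μs : ∀ n, Measure (X n)) [IsFiniteMeasure (μs 0)] in
noncomputable def content (hπ : ∀ n, Measurable (π n))
    (hμ : ∀ n, (μs (n + 1)).map (π n) = μs n) : Content (InvLim X π) where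
  toFun K := (limContent μs (K : Set (InvLim X π))).toNNReal
  mono' K L h := ENNReal.toNNReal_mono (limContent_lt_top _).ne (limContent_mono h)
  sup_disjoint' K L hKL _ _ := by
    rw [Compacts.coe_sup, limContent_union hπ hμ K.isCompact L.isCompact hKL,
      ENNReal.toNNReal_add (limContent_lt_top _).ne (limContent_lt_top _).ne]
  sup_le' K L := by
    rw [← ENNReal.toNNReal_add (limContent_lt_top _).ne (limContent_lt_top _).ne]
    exact ENNReal.toNNReal_mono
      (ENNReal.add_lt_top.mpr ⟨limContent_lt_top _, limContent_lt_top _⟩).ne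
      (limContent_union_le hπ hμ _ _)

variable {μs : ∀ n, Measure (X n)} [IsFiniteMeasure (μs 0)]

theorem content_apply (hπ : ∀ n, Measurable (π n))
    (hμ : ∀ n, (μs (n + 1)).map (π n) = μs n)
    (K : Compacts (InvLim X π)) : content μs hπ hμ K = limContent μs (K : Set (InvLim X π)) :=
  ENNReal.coe_toNNReal (limContent_lt_top _).ne

end Construction

section Regularity

open TopologicalSpace

variable [∀ n, TopologicalSpace (X n)] [∀ n, CompactSpace (X n)] [∀ n, T2Space (X n)]
  [∀ n, PseudoMetrizableSpace (X n)] [∀ n, MeasurableSpace (X n)] [∀ n, BorelSpace (X n)]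
  {μs : ∀ n, Measure (X n)} [∀ n, IsFiniteMeasure (μs n)]

theorem contentRegular_content (hsurj : ∀ n, Function.Surjective (π n))
    (hπ : ∀ n, Continuous (π n)) (hμ : ∀ n, (μs (n + 1)).map (π n) = μs n) :
    (content μs (fun n => (hπ n).measurable) hμ).ContentRegular := by
  have := compactSpace hπ
  intro K
  refine le_antisymm (le_iInf₂ fun K' hK' => Content.mono _ _ _ (hK'.trans interior_subset)) ?_
  rw [content_apply, limContent]
  refine le_iInf fun n => ?_
  rw [Set.measure_eq_iInf_isOpen]
  refine le_iInf₂ fun U hKU => le_iInf fun hU => ?_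
  obtain ⟨L, hL, hKL, hLU⟩ :=
    exists_compact_between (K.isCompact.image (continuous_proj n)) hU hKU
  let K' : Compacts (InvLim X π) :=
    ⟨proj n ⁻¹' L, (hL.isClosed.preimage (continuous_proj n)).isCompact⟩
  have hKK' : (K : Set (InvLim X π)) ⊆ interior K' :=
    (Set.image_subset_iff.mp hKL).trans
      (preimage_interior_subset_interior_preimage (continuous_proj n))
  refine iInf₂_le_of_le K' hKK' ((content_apply _ hμ K').trans_le ?_)
  exact (limContent_preimage_proj hsurj (fun n => (hπ n).measurable) hμ
    hL.isClosed.measurableSet).trans_le (measure_mono hLU)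

theorem map_proj_content_measure (hsurj : ∀ n, Function.Surjective (π n))
    (hπ : ∀ n, Continuous (π n)) (hμ : ∀ n, (μs (n + 1)).map (π n) = μs n) (n : ℕ) :
    (content μs (fun n => (hπ n).measurable) hμ).measure.map (proj n) = μs n := by
  have := compactSpace hπ
  have on_closed {B : Set (X n)} (hB : IsClosed B) :
      (content μs (fun n => (hπ n).measurable) hμ).measure.map (proj n) B = μs n B := by
    rw [Measure.map_apply (measurable_proj n) hB.measurableSet]
    refine (Content.measure_eq_content_of_regular _ (contentRegular_content hsurj hπ hμ)
      ⟨_, (hB.preimage (continuous_proj n)).isCompact⟩).trans ?_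
    rw [content_apply]
    exact limContent_preimage_proj hsurj (fun n => (hπ n).measurable) hμ hB.measurableSet
  exact (ext_of_generate_finite _
    (BorelSpace.measurable_eq.trans borel_eq_generateFrom_isClosed) isPiSystem_isClosed
    (fun B hB => (on_closed hB).symm) (on_closed isClosed_univ).symm).symm

end Regularity

end InvLim

theorem inverse_limit_measure_general (X : ℕ → Type*) [∀ n, MetricSpace (X n)]
    [∀ n, CompactSpace (X n)]
    [∀ n, MeasurableSpace (X n)] [∀ n, BorelSpace (X n)]
    (π : ∀ n, X (n + 1) → X n)
    (hsurj : ∀ n, Function.Surjective (π n))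
    (hlip : ∀ n, LipschitzWith 1 (π n))
    (μs : ∀ n, Measure (X n)) (hprob : ∀ n, IsProbabilityMeasure (μs n))
    (hcompat : ∀ n, (μs (n + 1)).map (π n) = μs n) :
    ∃! μ : Measure (InvLim X π),
      μ.Regular ∧ ∀ n, μ.map (fun x : InvLim X π => x.1 n) = μs n := by
  have hπ (n : ℕ) : Continuous (π n) := (hlip n).continuous
  have := InvLim.compactSpace hπ
  have hmap := InvLim.map_proj_content_measure hsurj hπ hcompat
  refine ⟨(InvLim.content μs (fun n => (hπ n).measurable) hcompat).measure,
    ⟨Content.regular _, hmap⟩, fun ν hν => ?_⟩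
  exact InvLim.measure_eq_of_map_proj_eq (fun n => (hπ n).measurable) hν.2 hmap

/-- Inverse limits of measures: given compatible probability (Radon) measures `μ n` on an
inverse system of compact metric spaces with `1`-Lipschitz surjective bonding maps and fiber
diameters tending to `0`, there is a unique (regular, i.e. Radon) measure `μ` on the inverse
limit pushing forward to every `μ n`. -/
theorem inverse_limit_measure (X : ℕ → Type*) [∀ n, MetricSpace (X n)]
    [∀ n, CompactSpace (X n)] [∀ n, Nonempty (X n)]
    [∀ n, MeasurableSpace (X n)] [∀ n, BorelSpace (X n)]
    (π : ∀ n, X (n + 1) → X n)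
    (hsurj : ∀ n, Function.Surjective (π n))
    (hlip : ∀ n, LipschitzWith 1 (π n))
    (μs : ∀ n, Measure (X n)) (hprob : ∀ n, IsProbabilityMeasure (μs n))
    (hcompat : ∀ n, (μs (n + 1)).map (π n) = μs n)
    (hfib : ∀ ε : ℝ, 0 < ε → ∃ N, ∀ n ≥ N, ∀ x y : InvLim X π,
      x.1 n = y.1 n → invLimDist π x y ≤ ε) :
    ∃! μ : Measure (InvLim X π),
      μ.Regular ∧ ∀ n, μ.map (fun x : InvLim X π => x.1 n) = μs n :=
  inverse_limit_measure_general X π hsurj hlip μs hprob hcompat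
end
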